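/- arXiv:2408.15946 — 3 statements merged into one kernel-verified Lean document; each statement's English description precedes it below -/
import Mathlib

section
/- For every θ ∈ ℝ^𝔠, the lowered coordinate vector θ_i := Σ_j 𝔤_{ij}(θ) θ^j satisfies −1/e < θ_i < c/e for each i ∈ [𝔠], where c = 𝔠 + 1 and 𝔤 is the Fisher-Rao metric in exponential coordinates. -/
noncomputable def psiFn (𝔠 : ℕ) (θ : Fin 𝔠 → ℝ) : ℝ :=
  Real.log (1 + ∑ j, Real.exp (θ j))

noncomputable def pFn (𝔠 : ℕ) (i : Fin 𝔠) (θ : Fin 𝔠 → ℝ) : ℝ :=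
  Real.exp (θ i - psiFn 𝔠 θ)

noncomputable def frMetric (𝔠 : ℕ) (i j : Fin 𝔠) (θ : Fin 𝔠 → ℝ) : ℝ :=
  (if i = j then pFn 𝔠 i θ else 0) - pFn 𝔠 i θ * pFn 𝔠 j θ

lemma key_mul_exp (t : ℝ) : -(1 / Real.exp 1) ≤ t * Real.exp t := by
  have h := Real.add_one_le_exp (-t - 1)
  have h2 : -t ≤ Real.exp (-t - 1) := by linarith
  have h3 : (-t) * Real.exp t ≤ Real.exp (-t - 1) * Real.exp t :=
    mul_le_mul_of_nonneg_right h2 (Real.exp_pos t).le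
  rw [← Real.exp_add] at h3
  have he : -t - 1 + t = -1 := by ring
  rw [he, Real.exp_neg] at h3
  have hpos := Real.exp_pos 1
  rw [one_div]
  linarith

/-- The lowered coordinates θ_i = Σ_j 𝔤_{ij}(θ) θ^j satisfy
    −1/e < θ_i < c/e, with c = 𝔠 + 1. -/
theorem lowered_coordinate_bounds (𝔠 : ℕ) (h𝔠 : 1 ≤ 𝔠) (θ : Fin 𝔠 → ℝ) (i : Fin 𝔠) :
    -(1 / Real.exp 1) < ∑ j, frMetric 𝔠 i j θ * θ j ∧
      ∑ j, frMetric 𝔠 i j θ * θ j < (𝔠 + 1) / Real.exp 1 := by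
  set ψ := psiFn 𝔠 θ with hψdef
  have hsumpos : 0 < ∑ j, Real.exp (θ j) :=
    Finset.sum_pos (fun j _ => Real.exp_pos _) ⟨⟨0, h𝔠⟩, Finset.mem_univ _⟩
  have hψpos : 0 < ψ := Real.log_pos (by linarith)
  have hs : ∀ j : Fin 𝔠, θ j - ψ < 0 := by
    intro j
    have h1 : Real.exp (θ j) < 1 + ∑ k, Real.exp (θ k) := by
      have : Real.exp (θ j) ≤ ∑ k, Real.exp (θ k) :=
        Finset.single_le_sum (fun k _ => (Real.exp_pos _).le) (Finset.mem_univ j)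
      linarith
    have h2 := Real.log_lt_log (Real.exp_pos _) h1
    rw [Real.log_exp] at h2
    have : θ j < ψ := h2
    linarith
  have hE : ∑ j, Real.exp (θ j - ψ) = 1 - Real.exp (-ψ) := by
    have hexpψ : Real.exp ψ = 1 + ∑ j, Real.exp (θ j) := Real.exp_log (by linarith)
    have h1 : ∀ j : Fin 𝔠, Real.exp (θ j - ψ) = Real.exp (θ j) * Real.exp (-ψ) := by
      intro j; rw [← Real.exp_add]; ring_nf
    rw [Finset.sum_congr rfl (fun j _ => h1 j), ← Finset.sum_mul]
    have h2 : ∑ j, Real.exp (θ j) = Real.exp ψ - 1 := by linarith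
    rw [h2, sub_mul, ← Real.exp_add]
    simp
  have h1 : ∑ j, frMetric 𝔠 i j θ * θ j
      = pFn 𝔠 i θ * θ i - pFn 𝔠 i θ * ∑ j, pFn 𝔠 j θ * θ j := by
    simp only [frMetric, sub_mul, Finset.sum_sub_distrib, ite_mul, zero_mul,
      Finset.sum_ite_eq, Finset.mem_univ, if_true, Finset.mul_sum]
    congr 1
    exact Finset.sum_congr rfl (fun j _ => by ring)
  have h2 : ∑ j, pFn 𝔠 j θ * θ j
      = (∑ j, (θ j - ψ) * Real.exp (θ j - ψ)) + ψ * (1 - Real.exp (-ψ)) := by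
    rw [← hE, Finset.mul_sum, ← Finset.sum_add_distrib]
    exact Finset.sum_congr rfl (fun j _ => by simp only [pFn, ← hψdef]; ring)
  have hpi : pFn 𝔠 i θ = Real.exp (θ i - ψ) := rfl
  set T := ∑ j, (θ j - ψ) * Real.exp (θ j - ψ) with hT
  have hrw : ∑ j, frMetric 𝔠 i j θ * θ j
      = (θ i - ψ) * Real.exp (θ i - ψ)
        + Real.exp (θ i - ψ) * (ψ * Real.exp (-ψ))
        + Real.exp (θ i - ψ) * (-T) := by
    rw [h1, h2, hpi]
    ring
  have hTneg : T < 0 := by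
    rw [hT]
    apply Finset.sum_neg (fun j _ => mul_neg_of_neg_of_pos (hs j) (Real.exp_pos _))
      ⟨i, Finset.mem_univ _⟩
  have hTge : -T ≤ (𝔠 : ℝ) * (1 / Real.exp 1) := by
    rw [hT, ← Finset.sum_neg_distrib]
    calc ∑ j, -((θ j - ψ) * Real.exp (θ j - ψ))
        ≤ ∑ _j : Fin 𝔠, (1 / Real.exp 1) := by
          apply Finset.sum_le_sum
          intro j _
          have := key_mul_exp (θ j - ψ)
          linarith
      _ = (𝔠 : ℝ) * (1 / Real.exp 1) := by
          rw [Finset.sum_const, Finset.card_univ, Fintype.card_fin, nsmul_eq_mul]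
  have hxlt1 : Real.exp (θ i - ψ) < 1 := Real.exp_lt_one_iff.mpr (hs i)
  have hxpos : 0 < Real.exp (θ i - ψ) := Real.exp_pos _
  have hψe : ψ * Real.exp (-ψ) ≤ 1 / Real.exp 1 := by
    have := key_mul_exp (-ψ)
    linarith
  have hψepos : 0 < ψ * Real.exp (-ψ) := mul_pos hψpos (Real.exp_pos _)
  have hie := key_mul_exp (θ i - ψ)
  have hineg : (θ i - ψ) * Real.exp (θ i - ψ) < 0 :=
    mul_neg_of_neg_of_pos (hs i) hxpos
  constructor
  · rw [hrw]
    have t2 : 0 < Real.exp (θ i - ψ) * (ψ * Real.exp (-ψ)) := mul_pos hxpos hψepos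
    have t3 : 0 < Real.exp (θ i - ψ) * (-T) := mul_pos hxpos (by linarith)
    linarith
  · rw [hrw]
    have t2 : Real.exp (θ i - ψ) * (ψ * Real.exp (-ψ)) ≤ 1 / Real.exp 1 := by
      calc Real.exp (θ i - ψ) * (ψ * Real.exp (-ψ)) ≤ 1 * (ψ * Real.exp (-ψ)) :=
            mul_le_mul_of_nonneg_right hxlt1.le hψepos.le
        _ = ψ * Real.exp (-ψ) := one_mul _
        _ ≤ 1 / Real.exp 1 := hψe
    have t3 : Real.exp (θ i - ψ) * (-T) ≤ (𝔠 : ℝ) * (1 / Real.exp 1) := by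
      calc Real.exp (θ i - ψ) * (-T) ≤ 1 * (-T) :=
            mul_le_mul_of_nonneg_right hxlt1.le (by linarith)
        _ = -T := one_mul _
        _ ≤ (𝔠 : ℝ) * (1 / Real.exp 1) := hTge
    have hsplit : ((𝔠 : ℝ) + 1) / Real.exp 1 = 1 / Real.exp 1 + (𝔠 : ℝ) * (1 / Real.exp 1) := by
      field_simp
      ring
    rw [hsplit]
    linarith
end

section
/- For every θ ∈ ℝ^𝔠, the symmetric matrix B(θ) with entries B_{ij}(θ) = 𝔤_{ij}(θ) + (1/2) Σ_k θ^k ∂_k 𝔤_{ij}(θ) satisfies c₁ I ⪯ B(θ) ⪯ c₂ I, where c₁ = −(c²−1)/(2e), c₂ = (1/2)(1 + (c²−1)/e), and c = 𝔠 + 1. -/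
/-- B(θ) with entries B_{ij}(θ) = 𝔤_{ij}(θ) + (1/2) Σ_k θ^k ∂_k 𝔤_{ij}(θ). -/
noncomputable def Bmat (𝔠 : ℕ) (θ : Fin 𝔠 → ℝ) : Matrix (Fin 𝔠) (Fin 𝔠) ℝ :=
  Matrix.of fun i j =>
    frMetric 𝔠 i j θ +
      (1 / 2) * ∑ k, θ k * fderiv ℝ (fun θ' => frMetric 𝔠 i j θ') θ (Pi.single k 1)

open Real Finset Matrix

namespace Matrix

variable {ι : Type*}

theorem isHermitian_vecMulVec_add_vecMulVec (u w : ι → ℝ) :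
    (vecMulVec u w + vecMulVec w u).IsHermitian :=
  IsHermitian.ext fun i j => by simp only [star_trivial, add_apply, vecMulVec_apply]; ring

variable [Fintype ι]

theorem abs_dotProduct_mulVec_le_of_abs_row_sum_le {A : Matrix ι ι ℝ} (hA : A.IsHermitian)
    {r : ℝ} (hr : ∀ i, ∑ j, |A i j| ≤ r) (v : ι → ℝ) : |v ⬝ᵥ A *ᵥ v| ≤ r * (v ⬝ᵥ v) := by
  have hsymm : ∀ i j, |A j i| = |A i j| := fun i j => by rw [← hA.apply i j, star_trivial]
  have hamgm : ∀ i j, |v i * (A i j * v j)| ≤ |A i j| * ((v i ^ 2 + v j ^ 2) / 2) := fun i j => by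
    rw [abs_mul, abs_mul, mul_left_comm]
    refine mul_le_mul_of_nonneg_left ?_ (abs_nonneg _)
    nlinarith [sq_nonneg (|v i| - |v j|), sq_abs (v i), sq_abs (v j)]
  have hswap : ∑ i, ∑ j, |A i j| * v j ^ 2 = ∑ i, ∑ j, |A i j| * v i ^ 2 := by
    rw [Finset.sum_comm]
    simp only [hsymm]
  calc |v ⬝ᵥ A *ᵥ v| = |∑ i, ∑ j, v i * (A i j * v j)| := by
        simp only [dotProduct, mulVec, Finset.mul_sum]
    _ ≤ ∑ i, ∑ j, |A i j| * ((v i ^ 2 + v j ^ 2) / 2) :=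
        (abs_sum_le_sum_abs _ _).trans <| sum_le_sum fun i _ =>
          (abs_sum_le_sum_abs _ _).trans <| sum_le_sum fun j _ => hamgm i j
    _ = ∑ i, (∑ j, |A i j|) * v i ^ 2 := by
        have hsplit : ∀ i j, |A i j| * ((v i ^ 2 + v j ^ 2) / 2)
            = (|A i j| * v i ^ 2 + |A i j| * v j ^ 2) / 2 := fun i j => by ring
        simp only [hsplit, ← sum_div, sum_add_distrib, hswap, ← Finset.sum_mul]
        ring
    _ ≤ ∑ i, r * v i ^ 2 := sum_le_sum fun i _ => mul_le_mul_of_nonneg_right (hr i) (sq_nonneg _)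
    _ = r * (v ⬝ᵥ v) := by simp only [dotProduct, Finset.mul_sum, sq]

variable [DecidableEq ι] {p : ι → ℝ}

theorem posSemidef_smul_one_sub_of_abs_row_sum_le {A : Matrix ι ι ℝ} (hA : A.IsHermitian)
    {r : ℝ} (hr : ∀ i, ∑ j, |A i j| ≤ r) : (r • 1 - A).PosSemidef := by
  refine .of_dotProduct_mulVec_nonneg ((isHermitian_one.smul (IsSelfAdjoint.all r)).sub hA)
    fun v => ?_
  have := (abs_le.mp (abs_dotProduct_mulVec_le_of_abs_row_sum_le hA hr v)).2
  simp only [star_trivial, sub_mulVec, smul_mulVec, one_mulVec, dotProduct_sub, dotProduct_smul,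
    smul_eq_mul]
  linarith

theorem posSemidef_add_smul_one_of_abs_row_sum_le {A : Matrix ι ι ℝ} (hA : A.IsHermitian)
    {r : ℝ} (hr : ∀ i, ∑ j, |A i j| ≤ r) : (A + r • 1).PosSemidef := by
  refine .of_dotProduct_mulVec_nonneg (hA.add (isHermitian_one.smul (IsSelfAdjoint.all r)))
    fun v => ?_
  have := (abs_le.mp (abs_dotProduct_mulVec_le_of_abs_row_sum_le hA hr v)).1
  simp only [star_trivial, add_mulVec, smul_mulVec, one_mulVec, dotProduct_add, dotProduct_smul,
    smul_eq_mul]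
  linarith

theorem dotProduct_diagonal_sub_vecMulVec_mulVec (p v : ι → ℝ) :
    v ⬝ᵥ (diagonal p - vecMulVec p p) *ᵥ v = ∑ i, p i * v i ^ 2 - (∑ i, p i * v i) ^ 2 := by
  rw [sub_mulVec, dotProduct_sub]
  congr 1
  · simp only [dotProduct, mulVec_diagonal]
    exact sum_congr rfl fun i _ => by ring
  · simp only [dotProduct, mulVec, vecMulVec_apply, sq, mul_sum, sum_mul]
    exact sum_congr rfl fun i _ => sum_congr rfl fun j _ => by ring

theorem posSemidef_diagonal_sub_vecMulVec (hp : 0 ≤ p) (hp_sum : ∑ i, p i ≤ 1) :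
    (diagonal p - vecMulVec p p).PosSemidef := by
  have hvec : (vecMulVec p p).IsHermitian := by
    simpa using (posSemidef_vecMulVec_self_star p).isHermitian
  refine .of_dotProduct_mulVec_nonneg ((isHermitian_diagonal p).sub hvec) fun v => ?_
  rw [star_trivial, dotProduct_diagonal_sub_vecMulVec_mulVec, sub_nonneg]
  have hcs : (∑ i, p i * v i) ^ 2 ≤ (∑ i, p i) * ∑ i, p i * v i ^ 2 :=
    sum_sq_le_sum_mul_sum_of_sq_le_mul _ (fun i _ => hp i)
      (fun i _ => mul_nonneg (hp i) (sq_nonneg _)) fun i _ => (by ring : _ = _).le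
  have hq : 0 ≤ ∑ i, p i * v i ^ 2 := sum_nonneg fun i _ => mul_nonneg (hp i) (sq_nonneg _)
  nlinarith

theorem posSemidef_half_smul_one_sub_diagonal_sub_vecMulVec (hp : 0 ≤ p)
    (hp_sum : ∑ i, p i ≤ 1) : ((1 / 2 : ℝ) • 1 - (diagonal p - vecMulVec p p)).PosSemidef := by
  refine posSemidef_smul_one_sub_of_abs_row_sum_le
    (posSemidef_diagonal_sub_vecMulVec hp hp_sum).isHermitian fun i => ?_
  have hpi := (single_le_sum (fun j _ => hp j) (mem_univ i)).trans hp_sum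
  have hpi0 : 0 ≤ p i := hp i
  have hentry : ∀ j, |(diagonal p - vecMulVec p p) i j|
      = (if i = j then p i - 2 * p i ^ 2 else 0) + p i * p j := fun j => by
    rcases eq_or_ne i j with rfl | hij
    · rw [sub_apply, diagonal_apply_eq, vecMulVec_apply, abs_of_nonneg (by nlinarith)]
      simp only [if_true]; ring
    · rw [sub_apply, diagonal_apply_ne _ hij, vecMulVec_apply, zero_sub, abs_neg,
        abs_of_nonneg (mul_nonneg (hp i) (hp j)), if_neg hij, zero_add]
  rw [sum_congr rfl fun j _ => hentry j, sum_add_distrib, sum_ite_eq, if_pos (mem_univ i),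
    ← mul_sum]
  nlinarith [mul_le_mul_of_nonneg_left hp_sum hpi0, sq_nonneg (p i - 1 / 2)]

theorem abs_row_sum_diagonal_sub_vecMulVec_add_vecMulVec_le (hp : 0 ≤ p)
    (hp_sum : ∑ i, p i ≤ 1) {c : ι → ℝ} {K : ℝ} (hc : ∀ i, |c i| ≤ K) (i : ι) :
    ∑ j, |(diagonal c - (vecMulVec c p + vecMulVec p c)) i j| ≤ (Fintype.card ι + 2) * K := by
  have hentry : ∀ j, |(diagonal c - (vecMulVec c p + vecMulVec p c)) i j|
      ≤ (if i = j then |c i| else 0) + |c i| * p j + p i * |c j| := fun j => by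
    rw [sub_apply, add_apply, vecMulVec_apply, vecMulVec_apply, diagonal_apply]
    refine (abs_sub _ _).trans (add_le_add ?_ ?_) |>.trans_eq (add_assoc _ _ _).symm
    · split_ifs <;> simp
    · refine (abs_add_le _ _).trans_eq ?_
      rw [abs_mul, abs_mul, abs_of_nonneg (hp i), abs_of_nonneg (hp j)]
  have hK : 0 ≤ K := (abs_nonneg _).trans (hc i)
  calc ∑ j, |(diagonal c - (vecMulVec c p + vecMulVec p c)) i j|
      ≤ ∑ j, ((if i = j then |c i| else 0) + |c i| * p j + p i * |c j|) :=
        sum_le_sum fun j _ => hentry j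
    _ = |c i| + |c i| * ∑ j, p j + p i * ∑ j, |c j| := by
        rw [sum_add_distrib, sum_add_distrib, sum_ite_eq, if_pos (mem_univ i), ← mul_sum,
          ← mul_sum]
    _ ≤ K + K * 1 + 1 * (Fintype.card ι * K) := by
        gcongr
        · exact hc i
        · exact sum_nonneg fun j _ => hp j
        · exact hc i
        · exact (single_le_sum (fun j _ => hp j) (mem_univ i)).trans hp_sum
        · simpa using sum_le_sum fun j (_ : j ∈ univ) => hc j
    _ = (Fintype.card ι + 2) * K := by ring

end Matrix

theorem ContinuousLinearMap.sum_mul_apply_single {ι : Type*} [Fintype ι] [DecidableEq ι]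
    (L : (ι → ℝ) →L[ℝ] ℝ) (x : ι → ℝ) : ∑ k, x k * L (Pi.single k 1) = L x := by
  conv_rhs => rw [← univ_sum_single x, map_sum]
  refine sum_congr rfl fun k _ => ?_
  rw [← smul_eq_mul, ← map_smul, ← Pi.single_smul', smul_eq_mul, mul_one]

theorem exp_mul_exp_mul_abs_sub_le (x y : ℝ) :
    exp x * exp y * |x - y| ≤ (exp x + exp y) ^ 2 / exp 1 := by
  wlog hyx : y ≤ x generalizing x y
  · rw [abs_sub_comm, mul_comm (exp x), add_comm]
    exact this y x (le_of_not_ge hyx)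
  have hexp_y : exp y = exp x * exp (-(x - y)) := by rw [← exp_add]; ring_nf
  calc exp x * exp y * |x - y| = exp x ^ 2 * ((x - y) * exp (-(x - y))) := by
        rw [abs_of_nonneg (sub_nonneg.mpr hyx), hexp_y]; ring
    _ ≤ exp x ^ 2 * exp (-1) := by gcongr; exact mul_exp_neg_le_exp_neg_one _
    _ ≤ (exp x + exp y) ^ 2 / exp 1 := by
        rw [exp_neg, ← div_eq_mul_inv]
        gcongr
        linarith [exp_pos y]

theorem abs_exp_div_mul_exp_div_mul_sub_le {x y Z : ℝ} (hZ : exp x + exp y ≤ Z) :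
    |exp x / Z * (exp y / Z) * (x - y)| ≤ 1 / exp 1 := by
  have hxy : 0 < exp x + exp y := by positivity
  have hZ0 : 0 < Z := hxy.trans_le hZ
  calc |exp x / Z * (exp y / Z) * (x - y)| = exp x * exp y * |x - y| / Z ^ 2 := by
        rw [abs_mul, abs_of_pos (by positivity)]; ring
    _ ≤ (exp x + exp y) ^ 2 / exp 1 / Z ^ 2 := by gcongr; exact exp_mul_exp_mul_abs_sub_le x y
    _ ≤ Z ^ 2 / exp 1 / Z ^ 2 := by gcongr
    _ = 1 / exp 1 := by field_simp

noncomputable def partitionFn (𝔠 : ℕ) (θ : Fin 𝔠 → ℝ) : ℝ := 1 + ∑ j, exp (θ j)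

/-- The Euler derivative `Σ_k θ^k ∂_k p_i(θ)`. -/
noncomputable def eulerProb (𝔠 : ℕ) (θ : Fin 𝔠 → ℝ) (i : Fin 𝔠) : ℝ :=
  pFn 𝔠 i θ * (θ i - ∑ k, pFn 𝔠 k θ * θ k)

section Softmax

variable (𝔠 : ℕ) (θ : Fin 𝔠 → ℝ)

theorem exp_add_exp_zero_le_partitionFn (i : Fin 𝔠) : exp (θ i) + exp 0 ≤ partitionFn 𝔠 θ := by
  rw [exp_zero, partitionFn, add_comm]
  gcongr
  exact single_le_sum (fun j _ => (exp_pos (θ j)).le) (mem_univ i)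

theorem exp_add_exp_add_exp_zero_le_partitionFn {i k : Fin 𝔠} (hik : i ≠ k) :
    exp (θ i) + exp (θ k) ≤ partitionFn 𝔠 θ := by
  rw [← sum_pair (f := fun j => exp (θ j)) hik, partitionFn]
  exact (sum_le_sum_of_subset_of_nonneg (subset_univ _) fun j _ _ => (exp_pos _).le).trans
    (le_add_of_nonneg_left zero_le_one)

theorem partitionFn_pos : 0 < partitionFn 𝔠 θ := by
  rw [partitionFn]
  positivity

theorem pFn_eq_exp_div (i : Fin 𝔠) : pFn 𝔠 i θ = exp (θ i) / partitionFn 𝔠 θ := by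
  rw [pFn, exp_sub, psiFn, ← partitionFn, exp_log (partitionFn_pos 𝔠 θ)]

theorem one_sub_sum_pFn : 1 - ∑ i, pFn 𝔠 i θ = exp 0 / partitionFn 𝔠 θ := by
  simp only [pFn_eq_exp_div, ← sum_div, exp_zero]
  field_simp [(partitionFn_pos 𝔠 θ).ne']
  rw [partitionFn]; ring

theorem sum_pFn_le_one : ∑ i, pFn 𝔠 i θ ≤ 1 := by
  have h := one_sub_sum_pFn 𝔠 θ
  have hpos : 0 < exp 0 / partitionFn 𝔠 θ := div_pos (exp_pos 0) (partitionFn_pos 𝔠 θ)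
  linarith

theorem eulerProb_eq_sum (i : Fin 𝔠) :
    eulerProb 𝔠 θ i = exp (θ i) / partitionFn 𝔠 θ * (exp 0 / partitionFn 𝔠 θ) * (θ i - 0)
      + ∑ k ∈ univ.erase i,
          exp (θ i) / partitionFn 𝔠 θ * (exp (θ k) / partitionFn 𝔠 θ) * (θ i - θ k) := by
  rw [sum_erase univ (by simp), ← one_sub_sum_pFn]
  have hsum : ∑ k, exp (θ i) / partitionFn 𝔠 θ * (exp (θ k) / partitionFn 𝔠 θ) * (θ i - θ k)
      = pFn 𝔠 i θ * θ i * ∑ k, pFn 𝔠 k θ - pFn 𝔠 i θ * ∑ k, pFn 𝔠 k θ * θ k := by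
    simp only [pFn_eq_exp_div, mul_sum, ← sum_sub_distrib]
    exact sum_congr rfl fun k _ => by ring
  rw [hsum, eulerProb, ← pFn_eq_exp_div]
  ring

theorem abs_eulerProb_le (i : Fin 𝔠) : |eulerProb 𝔠 θ i| ≤ 𝔠 / exp 1 := by
  have hcard : ((univ.erase i).card : ℝ) + 1 = 𝔠 := by
    exact_mod_cast (card_erase_add_one (mem_univ i)).trans (card_fin 𝔠)
  rw [eulerProb_eq_sum, ← hcard, add_div, add_comm _ (1 / exp 1)]
  refine (abs_add_le _ _).trans (add_le_add ?_ ?_)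
  · exact abs_exp_div_mul_exp_div_mul_sub_le (exp_add_exp_zero_le_partitionFn 𝔠 θ i)
  · refine (abs_sum_le_sum_abs _ _).trans <| (sum_le_card_nsmul _ _ _ fun k hk =>
      abs_exp_div_mul_exp_div_mul_sub_le <|
        exp_add_exp_add_exp_zero_le_partitionFn 𝔠 θ (ne_of_mem_erase hk).symm).trans_eq ?_
    rw [nsmul_eq_mul, mul_one_div]

theorem hasFDerivAt_psiFn :
    HasFDerivAt (psiFn 𝔠)
      (∑ j, pFn 𝔠 j θ • ContinuousLinearMap.proj (R := ℝ) (φ := fun _ => ℝ) j) θ := by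
  have hZ : HasFDerivAt (partitionFn 𝔠)
      (∑ j, exp (θ j) • ContinuousLinearMap.proj (R := ℝ) (φ := fun _ => ℝ) j) θ := by
    have hexp : ∀ j, HasFDerivAt (fun θ' : Fin 𝔠 → ℝ => exp (θ' j))
        (exp (θ j) • ContinuousLinearMap.proj (R := ℝ) (φ := fun _ => ℝ) j) θ := fun j =>
      (ContinuousLinearMap.proj (R := ℝ) (φ := fun _ => ℝ) j).hasFDerivAt.exp
    exact (HasFDerivAt.fun_sum fun j _ => hexp j).const_add 1
  refine (hZ.log (partitionFn_pos 𝔠 θ).ne').congr_fderiv ?_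
  simp only [smul_sum, smul_smul, pFn_eq_exp_div, div_eq_inv_mul]

theorem hasFDerivAt_pFn (i : Fin 𝔠) :
    HasFDerivAt (pFn 𝔠 i) (pFn 𝔠 i θ • (ContinuousLinearMap.proj (R := ℝ) (φ := fun _ => ℝ) i -
      ∑ j, pFn 𝔠 j θ • ContinuousLinearMap.proj (R := ℝ) (φ := fun _ => ℝ) j)) θ :=
  ((ContinuousLinearMap.proj (R := ℝ) (φ := fun _ => ℝ) i).hasFDerivAt.fun_sub
    (hasFDerivAt_psiFn 𝔠 θ)).exp

theorem fderiv_frMetric_apply_self (i j : Fin 𝔠) :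
    fderiv ℝ (frMetric 𝔠 i j) θ θ = (if i = j then eulerProb 𝔠 θ i else 0)
      - (eulerProb 𝔠 θ i * pFn 𝔠 j θ + pFn 𝔠 i θ * eulerProb 𝔠 θ j) := by
  have hdiag : HasFDerivAt (fun θ' => if i = j then pFn 𝔠 i θ' else 0)
      (if i = j then pFn 𝔠 i θ • (ContinuousLinearMap.proj (R := ℝ) (φ := fun _ => ℝ) i -
        ∑ j, pFn 𝔠 j θ • ContinuousLinearMap.proj (R := ℝ) (φ := fun _ => ℝ) j) else 0) θ := by
    split_ifs
    exacts [hasFDerivAt_pFn 𝔠 θ i, hasFDerivAt_const 0 θ]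
  have hfr : HasFDerivAt (frMetric 𝔠 i j) _ θ :=
    hdiag.fun_sub ((hasFDerivAt_pFn 𝔠 θ i).fun_mul (hasFDerivAt_pFn 𝔠 θ j))
  rw [hfr.fderiv]
  split_ifs <;>
    simp only [_root_.sub_apply, _root_.add_apply, _root_.smul_apply, _root_.zero_apply,
      _root_.sum_apply, ContinuousLinearMap.proj_apply, smul_eq_mul, eulerProb] <;>
    ring

end Softmax

theorem Bmat_eq (𝔠 : ℕ) (θ : Fin 𝔠 → ℝ) :
    Bmat 𝔠 θ = (diagonal (pFn 𝔠 · θ) - vecMulVec (pFn 𝔠 · θ) (pFn 𝔠 · θ))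
      + (diagonal ((1 / 2 : ℝ) • eulerProb 𝔠 θ)
        - (vecMulVec ((1 / 2 : ℝ) • eulerProb 𝔠 θ) (pFn 𝔠 · θ)
          + vecMulVec (pFn 𝔠 · θ) ((1 / 2 : ℝ) • eulerProb 𝔠 θ))) := by
  ext i j
  rw [Matrix.add_apply, Bmat, of_apply, ContinuousLinearMap.sum_mul_apply_single,
    fderiv_frMetric_apply_self, frMetric]
  simp only [Matrix.add_apply, Matrix.sub_apply, diagonal_apply, vecMulVec_apply, Pi.smul_apply,
    smul_eq_mul]
  split_ifs <;> ring

theorem Bmat_loewner_bounds_general (𝔠 : ℕ) (θ : Fin 𝔠 → ℝ) :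
    (Bmat 𝔠 θ - (-((((𝔠 : ℝ) + 1) ^ 2 - 1) / (2 * Real.exp 1))) • (1 : Matrix (Fin 𝔠) (Fin 𝔠) ℝ)).PosSemidef ∧
    (((1 / 2) * (1 + (((𝔠 : ℝ) + 1) ^ 2 - 1) / Real.exp 1)) • (1 : Matrix (Fin 𝔠) (Fin 𝔠) ℝ) - Bmat 𝔠 θ).PosSemidef := by
  rw [Bmat_eq]
  set p : Fin 𝔠 → ℝ := (pFn 𝔠 · θ)
  set c : Fin 𝔠 → ℝ := (1 / 2 : ℝ) • eulerProb 𝔠 θ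
  have hp : 0 ≤ p := fun i => (exp_pos _).le
  have hp_sum : ∑ i, p i ≤ 1 := sum_pFn_le_one 𝔠 θ
  have hc : ∀ i, |c i| ≤ 𝔠 / exp 1 / 2 := fun i => by
    rw [show c i = eulerProb 𝔠 θ i / 2 by simp [c]; ring, abs_div, abs_two]
    exact div_le_div_of_nonneg_right (abs_eulerProb_le 𝔠 θ i) zero_le_two
  have hK : (Fintype.card (Fin 𝔠) + 2) * (𝔠 / exp 1 / 2)
      = (((𝔠 : ℝ) + 1) ^ 2 - 1) / (2 * exp 1) := by
    rw [Fintype.card_fin]; field_simp; ring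
  have hrow := hK ▸ abs_row_sum_diagonal_sub_vecMulVec_add_vecMulVec_le hp hp_sum hc
  have hherm := (isHermitian_diagonal c).sub (isHermitian_vecMulVec_add_vecMulVec c p)
  constructor
  · rw [neg_smul, sub_neg_eq_add, add_assoc]
    exact (posSemidef_diagonal_sub_vecMulVec hp hp_sum).add
      (posSemidef_add_smul_one_of_abs_row_sum_le hherm hrow)
  · rw [show (1 / 2 : ℝ) * (1 + (((𝔠 : ℝ) + 1) ^ 2 - 1) / exp 1)
      = 1 / 2 + (((𝔠 : ℝ) + 1) ^ 2 - 1) / (2 * exp 1) by ring, add_smul, add_sub_add_comm]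
    exact (posSemidef_half_smul_one_sub_diagonal_sub_vecMulVec hp hp_sum).add
      (posSemidef_smul_one_sub_of_abs_row_sum_le hherm hrow)

/-- c₁ I ⪯ B(θ) ⪯ c₂ I with c₁ = −(c²−1)/(2e), c₂ = (1/2)(1 + (c²−1)/e), c = 𝔠+1. -/
theorem Bmat_loewner_bounds (𝔠 : ℕ) (h𝔠 : 1 ≤ 𝔠) (θ : Fin 𝔠 → ℝ) :
    (Bmat 𝔠 θ - (-((((𝔠 : ℝ) + 1) ^ 2 - 1) / (2 * Real.exp 1))) • (1 : Matrix (Fin 𝔠) (Fin 𝔠) ℝ)).PosSemidef ∧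
    (((1 / 2) * (1 + (((𝔠 : ℝ) + 1) ^ 2 - 1) / Real.exp 1)) • (1 : Matrix (Fin 𝔠) (Fin 𝔠) ℝ) - Bmat 𝔠 θ).PosSemidef :=
  Bmat_loewner_bounds_general 𝔠 θ
end

section
/- The Christoffel symbols of the Levi-Civita connection of the Fisher-Rao metric on the open simplex in exponential coordinates are Γ^i_{jk}(θ) = (1/2)(δ^i_j δ_{jk} − δ^i_j p_k(θ) − δ^i_k p_j(θ)), where p_i(θ) = e^{θ^i − ψ(θ)}. -/
/-- Fisher-Rao metric matrix 𝔤(θ) with 𝔤_{ij} = δ_{ij} p_i − p_i p_j. -/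
noncomputable def frMatrix (𝔠 : ℕ) (θ : Fin 𝔠 → ℝ) : Matrix (Fin 𝔠) (Fin 𝔠) ℝ :=
  Matrix.of fun i j => (if i = j then pFn 𝔠 i θ else 0) - pFn 𝔠 i θ * pFn 𝔠 j θ

/-- Third partial derivative ∂_l ∂_j ∂_k ψ. -/
noncomputable def psi3 (𝔠 : ℕ) (l j k : Fin 𝔠) (θ : Fin 𝔠 → ℝ) : ℝ :=
  fderiv ℝ (fun θ'' =>
    fderiv ℝ (fun θ' => fderiv ℝ (psiFn 𝔠) θ' (Pi.single k 1)) θ'' (Pi.single j 1))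
    θ (Pi.single l 1)

namespace Matrix

variable {n R : Type*} [Fintype n] [DecidableEq n] [CommRing R]

theorem diagonal_sub_vecMulVec_eq_diagonal_mul (p q : n → R) :
    diagonal p - vecMulVec p q = diagonal p * (1 - vecMulVec 1 q) := by
  ext i j
  by_cases hij : i = j <;> simp [hij, diagonal_mul, vecMulVec_apply, mul_sub]

theorem det_diagonal_sub_vecMulVec (p q : n → R) :
    det (diagonal p - vecMulVec p q) = (∏ i, p i) * (1 - ∑ i, q i) := by
  rw [diagonal_sub_vecMulVec_eq_diagonal_mul, det_mul, det_diagonal, vecMulVec_eq Unit,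
    det_one_sub_mul_comm, det_unique]
  simp [dotProduct]

end Matrix

open Real ContinuousLinearMap

section FisherRao

variable {𝔠 : ℕ} (θ : Fin 𝔠 → ℝ)

theorem exp_psiFn : exp (psiFn 𝔠 θ) = 1 + ∑ j, exp (θ j) :=
  exp_log (by positivity)

theorem pFn_eq_div (i : Fin 𝔠) : pFn 𝔠 i θ = exp (θ i) / exp (psiFn 𝔠 θ) :=
  exp_sub _ _

theorem sum_pFn : ∑ i, pFn 𝔠 i θ = 1 - exp (-psiFn 𝔠 θ) := by
  have hZ := exp_psiFn θ
  simp only [pFn_eq_div, ← Finset.sum_div, exp_neg]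
  field_simp
  linarith

theorem frMatrix_eq_diagonal_sub_vecMulVec :
    frMatrix 𝔠 θ = Matrix.diagonal (pFn 𝔠 · θ) - Matrix.vecMulVec (pFn 𝔠 · θ) (pFn 𝔠 · θ) := by
  ext i j
  simp [frMatrix, Matrix.diagonal_apply, Matrix.vecMulVec_apply]

theorem det_frMatrix : (frMatrix 𝔠 θ).det = (∏ i, pFn 𝔠 i θ) * exp (-psiFn 𝔠 θ) := by
  rw [frMatrix_eq_diagonal_sub_vecMulVec, Matrix.det_diagonal_sub_vecMulVec, sum_pFn,
    sub_sub_cancel]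

theorem isUnit_det_frMatrix : IsUnit (frMatrix 𝔠 θ).det := by
  rw [det_frMatrix]
  exact (mul_pos (Finset.prod_pos fun i _ => exp_pos _) (exp_pos _)).ne'.isUnit

theorem hasFDerivAt_psiFn_s12 :
    HasFDerivAt (psiFn 𝔠) (∑ m, pFn 𝔠 m θ • (proj m : (Fin 𝔠 → ℝ) →L[ℝ] ℝ)) θ := by
  have hsum : HasFDerivAt (fun θ' : Fin 𝔠 → ℝ => 1 + ∑ j, exp (θ' j))
      (∑ m, exp (θ m) • (proj m : (Fin 𝔠 → ℝ) →L[ℝ] ℝ)) θ := by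
    simpa [Finset.sum_fn] using
      (HasFDerivAt.sum (u := Finset.univ) fun m _ => (hasFDerivAt_apply (𝕜 := ℝ) m θ).exp)
  have hcoeff : (1 + ∑ j, exp (θ j))⁻¹ • ∑ m, exp (θ m) • (proj m : (Fin 𝔠 → ℝ) →L[ℝ] ℝ)
      = ∑ m, pFn 𝔠 m θ • proj m := by
    simp only [← exp_psiFn θ, Finset.smul_sum, smul_smul, pFn_eq_div, div_eq_inv_mul]
  rw [← hcoeff]
  exact hsum.log (by positivity)

theorem hasFDerivAt_pFn_s12 (k : Fin 𝔠) :
    HasFDerivAt (pFn 𝔠 k)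
      (pFn 𝔠 k θ • (proj k - ∑ m, pFn 𝔠 m θ • (proj m : (Fin 𝔠 → ℝ) →L[ℝ] ℝ))) θ :=
  ((hasFDerivAt_apply k θ).sub (hasFDerivAt_psiFn_s12 θ)).exp

theorem fderiv_psiFn_single (k : Fin 𝔠) :
    fderiv ℝ (psiFn 𝔠) θ (Pi.single k 1) = pFn 𝔠 k θ := by
  simp [(hasFDerivAt_psiFn_s12 θ).fderiv, Pi.single_apply]

theorem fderiv_pFn_single (k l : Fin 𝔠) :
    fderiv ℝ (pFn 𝔠 k) θ (Pi.single l 1) = frMatrix 𝔠 θ l k := by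
  rw [(hasFDerivAt_pFn_s12 θ k).fderiv]
  by_cases hlk : l = k
  · subst hlk
    simp [frMatrix, Pi.single_apply]
    ring
  · simp [frMatrix, Pi.single_apply, hlk, Ne.symm hlk, mul_comm]

theorem fderiv_frMatrix_single (j k l : Fin 𝔠) :
    fderiv ℝ (fun θ' => frMatrix 𝔠 θ' j k) θ (Pi.single l 1)
      = (if j = k then frMatrix 𝔠 θ l k else 0)
        - (frMatrix 𝔠 θ l j * pFn 𝔠 k θ + pFn 𝔠 j θ * frMatrix 𝔠 θ l k) := by
  have hp : ∀ m, HasFDerivAt (pFn 𝔠 m) (fderiv ℝ (pFn 𝔠 m) θ) θ :=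
    fun m => (hasFDerivAt_pFn_s12 θ m).differentiableAt.hasFDerivAt
  by_cases hjk : j = k
  · subst hjk
    conv_lhs => simp only [frMatrix, Matrix.of_apply, if_true]
    rw [((hp j).fun_sub ((hp j).fun_mul (hp j))).fderiv]
    simp only [sub_apply, add_apply, smul_apply, smul_eq_mul, fderiv_pFn_single, if_true]
    ring
  · conv_lhs => simp only [frMatrix, Matrix.of_apply, hjk, if_false]
    rw [((hasFDerivAt_const 0 θ).fun_sub ((hp j).fun_mul (hp k))).fderiv]
    simp only [sub_apply, add_apply, smul_apply, smul_eq_mul, fderiv_pFn_single, zero_apply, hjk,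
      if_false]
    ring

theorem psi3_eq_frMatrix_mulVec (l j k : Fin 𝔠) :
    psi3 𝔠 l j k θ = (Matrix.mulVec (frMatrix 𝔠 θ) fun i =>
      (if i = j then (if j = k then (1 : ℝ) else 0) else 0)
        - (if i = j then (1 : ℝ) else 0) * pFn 𝔠 k θ
        - (if i = k then (1 : ℝ) else 0) * pFn 𝔠 j θ) l := by
  have hψ : (fun θ' => fderiv ℝ (psiFn 𝔠) θ' (Pi.single k 1)) = pFn 𝔠 k :=
    funext fun θ' => fderiv_psiFn_single θ' k
  have hp : (fun θ' => fderiv ℝ (pFn 𝔠 k) θ' (Pi.single j 1)) = fun θ' => frMatrix 𝔠 θ' j k :=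
    funext fun θ' => fderiv_pFn_single θ' k j
  rw [psi3, hψ, hp, fderiv_frMatrix_single]
  simp only [Matrix.mulVec, dotProduct, ite_mul, one_mul, zero_mul, mul_sub, mul_ite, mul_one,
    mul_zero, Finset.sum_sub_distrib, Finset.sum_ite_eq', Finset.mem_univ, ↓reduceIte]
  split_ifs with hjk
  · subst hjk
    ring
  · ring

end FisherRao

/-- The Christoffel symbols of the second kind of the Fisher-Rao metric in
    exponential coordinates, Γ^i_{jk} = (1/2) 𝔤^{il} ∂_l∂_j∂_k ψ, equal
    (1/2)(δ^i_j δ_{jk} − δ^i_j p_k − δ^i_k p_j). -/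
theorem christoffel_second_kind_fisherRao (𝔠 : ℕ) (θ : Fin 𝔠 → ℝ) (i j k : Fin 𝔠) :
    (1 / 2) * ∑ l, (frMatrix 𝔠 θ)⁻¹ i l * psi3 𝔠 l j k θ
      = (1 / 2) * ((if i = j then (if j = k then (1 : ℝ) else 0) else 0)
          - (if i = j then (1 : ℝ) else 0) * pFn 𝔠 k θ
          - (if i = k then (1 : ℝ) else 0) * pFn 𝔠 j θ) := by
  simp_rw [psi3_eq_frMatrix_mulVec]
  change (1 / 2) * Matrix.mulVec (frMatrix 𝔠 θ)⁻¹ (Matrix.mulVec (frMatrix 𝔠 θ) _) i = _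
  rw [Matrix.mulVec_mulVec, Matrix.nonsing_inv_mul _ (isUnit_det_frMatrix θ), Matrix.one_mulVec]
end
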